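/- Let k ≥ 1 and let ψ be any vertex coloring of the parametric gadget T_k satisfying, for every i ∈ {1,…,k}: ψ(v_{i,1}) = ψ(v'_{i,4}), ψ(v_{i,3}) = ψ(v'_{i,1}), and ψ(v_{i,4}) = ψ(v'_{i,3}). Then for every vertex rainbow path R from v_s to v_t in T_k, there is no pair of vertices v_{ℓ,i} and v'_{ℓ',j} both lying on R with 1 ≤ i ≤ j ≤ 4 and ℓ, ℓ' ∈ {1,…,k}. -/

import Mathlib

open SimpleGraph

/-- The internal vertices of a walk: its support with the two endpoints removed. -/
def internalVerts {V : Type} {G : SimpleGraph V} {u v : V} (p : G.Walk u v) : List V :=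
  p.support.tail.dropLast

/-- A walk/path is *vertex rainbow* under the vertex coloring `ψ` if all of its internal
vertices have pairwise distinct colors. -/
def IsVertexRainbow {V C : Type} {G : SimpleGraph V} (ψ : V → C) {u v : V}
    (p : G.Walk u v) : Prop :=
  ((internalVerts p).map ψ).Nodup

/-- `G` is rainbow vertex connected under `ψ` if every pair of distinct vertices is joined
by a vertex rainbow path. -/
def RainbowVertexConnected {V C : Type} (G : SimpleGraph V) (ψ : V → C) : Prop :=
  ∀ u v : V, u ≠ v → ∃ p : G.Walk u v, p.IsPath ∧ IsVertexRainbow ψ p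

/-- `G` is strongly rainbow vertex connected under `ψ` if every pair of distinct vertices is
joined by a shortest path that is vertex rainbow. -/
def StrongRainbowVertexConnected {V C : Type} (G : SimpleGraph V) (ψ : V → C) : Prop :=
  ∀ u v : V, u ≠ v →
    ∃ p : G.Walk u v, p.IsPath ∧ p.length = G.dist u v ∧ IsVertexRainbow ψ p

/-- The rainbow vertex connection number: the least `k` such that some coloring with `k`
colors makes `G` rainbow vertex connected. -/
noncomputable def rvc {V : Type} (G : SimpleGraph V) : ℕ :=
  sInf {k : ℕ | ∃ ψ : V → Fin k, RainbowVertexConnected G ψ}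

/-- The strong rainbow vertex connection number: the least `k` such that some coloring with
`k` colors makes `G` strongly rainbow vertex connected. -/
noncomputable def srvc {V : Type} (G : SimpleGraph V) : ℕ :=
  sInf {k : ℕ | ∃ ψ : V → Fin k, StrongRainbowVertexConnected G ψ}

/-- Vertices of the parametric gadget `T_k`: the endpoints `v_s`, `v_t`, the left path
vertices `v_{i,ℓ}` and the right path vertices `v'_{i,ℓ}` (`i ∈ {1,…,k}`, `ℓ ∈ {1,…,4}`,
here 0-indexed). -/
inductive TkV (k : ℕ) : Type
  | vs : TkV k
  | vt : TkV k
  | left : Fin k → Fin 4 → TkV k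
  | right : Fin k → Fin 4 → TkV k
deriving DecidableEq

/-- The lexicographic position of `v_{i,ℓ}` along its side of the gadget. -/
def lexIdx {k : ℕ} (i : Fin k) (l : Fin 4) : ℕ := 4 * i.val + l.val

/-- The adjacency relation generating `T_k`: the left `v_s`–`v_t` path through all
`v_{i,ℓ}` in lexicographic order, the right `v_s`–`v_t` path through all `v'_{i,ℓ}`, and
for each `i` the four chords `(v_{i,1}, v'_{i,2})`, `(v_{i,2}, v'_{i,1})`,
`(v_{i,3}, v'_{i,4})`, `(v_{i,4}, v'_{i,3})` (0-indexed below). -/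
def TkRel (k : ℕ) : TkV k → TkV k → Prop
  | .vs, .left i l => lexIdx i l = 0
  | .vs, .right i l => lexIdx i l = 0
  | .left i l, .vt => lexIdx i l = 4 * k - 1
  | .right i l, .vt => lexIdx i l = 4 * k - 1
  | .left i l, .left i' l' => lexIdx i' l' = lexIdx i l + 1
  | .right i l, .right i' l' => lexIdx i' l' = lexIdx i l + 1
  | .left i l, .right i' l' => i = i' ∧
      ((l.val = 0 ∧ l'.val = 1) ∨ (l.val = 1 ∧ l'.val = 0) ∨
       (l.val = 2 ∧ l'.val = 3) ∨ (l.val = 3 ∧ l'.val = 2))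
  | _, _ => False

/-- The parametric gadget `T_k`: a cycle of length `8k + 2` together with `4k` chords. -/
def Tk (k : ℕ) : SimpleGraph (TkV k) := SimpleGraph.fromRel (TkRel k)

/-!
Place `vs` at position `0`, `left i l` and `right i l` at `4i + l + 1`, and `vt` at `4k + 1`.
Every edge joins consecutive positions and every chord starts at an odd position, so a `vs`–`vt`
walk crosses each cut between positions `2m` and `2m + 1` along one side. On a vertex rainbow
path, the three colour coincidences of block `i` force the cuts `2i`, `2i + 1` and `2i + 2` to be
crossed on the same side, so the path contains a whole side. A vertex of the other side then
repeats a colour, either directly or, when `l = 1`, through one of its two neighbours on the path.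
-/

namespace SimpleGraph.Walk

variable {V : Type} {G : SimpleGraph V} {u v x : V}

theorem mem_internalVerts {p : G.Walk u v} (hx : x ∈ p.support) (hu : x ≠ u) (hv : x ≠ v) :
    x ∈ internalVerts p := by
  rw [← p.cons_tail_support, List.mem_cons] at hx
  refine List.mem_dropLast_of_mem_of_ne_getLast (hx.resolve_left hu) ?_
  have hlast : (u :: p.support.tail).getLast (List.cons_ne_nil _ _) = v := by
    simp only [cons_tail_support, getLast_support]
  rwa [← List.getLast_cons (a := u), hlast]

theorem IsPath.exists_adj_mem_support_ne {p : G.Walk u v} (hp : p.IsPath)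
    (hx : x ∈ p.support) (hu : x ≠ u) (hv : x ≠ v) (w : V) :
    ∃ y ∈ p.support, G.Adj x y ∧ y ≠ w := by
  obtain ⟨n, rfl, hn⟩ := mem_support_iff_exists_getVert.mp hx
  have htwo := hp.ncard_neighborSet_toSubgraph_internal_eq_two (i := n)
    (by rintro rfl; simp at hu) (lt_of_le_of_ne hn (by rintro rfl; simp at hv))
  obtain ⟨y, hy, hyw⟩ : ∃ y ∈ p.toSubgraph.neighborSet (p.getVert n), y ≠ w := by
    by_contra! hsub
    have := Set.ncard_le_ncard (t := {w}) hsub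
    simp at this
    omega
  exact ⟨y, p.mem_verts_toSubgraph.mp hy.snd_mem, hy.adj_sub, hyw⟩

end SimpleGraph.Walk

theorem IsVertexRainbow.eq_of_mem_support {V C : Type} {G : SimpleGraph V} {ψ : V → C}
    {u v x y : V} {p : G.Walk u v} (hp : IsVertexRainbow ψ p)
    (hx : x ∈ p.support) (hxu : x ≠ u) (hxv : x ≠ v)
    (hy : y ∈ p.support) (hyu : y ≠ u) (hyv : y ≠ v) (hψ : ψ x = ψ y) : x = y :=
  List.inj_on_of_nodup_map hp (Walk.mem_internalVerts hx hxu hxv)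
    (Walk.mem_internalVerts hy hyu hyv) hψ

namespace TkV

variable {k : ℕ}

def pos : TkV k → ℕ
  | vs => 0
  | vt => 4 * k + 1
  | left i l => lexIdx i l + 1
  | right i l => lexIdx i l + 1

def onSide (s : Bool) (i : Fin k) (l : Fin 4) : TkV k := cond s (left i l) (right i l)

def IsOn : Bool → TkV k → Prop
  | _, vs => True
  | _, vt => True
  | s, left _ _ => s = true
  | s, right _ _ => s = false

def atPos (s : Bool) (p : ℕ) : TkV k :=
  if h₀ : p = 0 then vs
  else if h : p ≤ 4 * k then onSide s ⟨(p - 1) / 4, by omega⟩ ⟨(p - 1) % 4, by omega⟩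
  else vt

theorem atPos_lexIdx_succ (s : Bool) (i : Fin k) (l : Fin 4) :
    atPos s (lexIdx i l + 1) = onSide s i l := by
  have := i.isLt
  have := l.isLt
  simp only [atPos, lexIdx, Nat.add_one_ne_zero, Nat.add_sub_cancel,
    dif_pos (show 4 * i.val + l.val + 1 ≤ 4 * k by omega)]
  exact congrArg₂ (onSide s) (Fin.ext (by simp only; omega)) (Fin.ext (by simp only; omega))

theorem atPos_pos {s : Bool} {a : TkV k} (h : a.IsOn s) : atPos s (pos a) = a := by
  cases a with
  | vs => rfl
  | vt => simp [atPos, pos]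
  | left i l => cases h; exact atPos_lexIdx_succ true i l
  | right i l => cases h; exact atPos_lexIdx_succ false i l

theorem pos_adj {a b : TkV k} (h : (Tk k).Adj a b) : pos a + 1 = pos b ∨ pos b + 1 = pos a := by
  obtain ⟨-, h | h⟩ := (fromRel_adj _ _ _).mp h <;>
  · cases a <;> cases b <;> simp only [TkRel, lexIdx, pos] at h ⊢ <;> omega

theorem exists_isOn_of_adj {a b : TkV k} (hab : (Tk k).Adj a b) (hpos : pos b = pos a + 1)
    (heven : Even (pos a)) : ∃ s, a.IsOn s ∧ b.IsOn s := by
  obtain ⟨-, h | h⟩ := (fromRel_adj _ _ _).mp hab <;>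
  · cases a <;> cases b <;> simp only [TkRel, lexIdx, pos, IsOn] at h hpos heven ⊢ <;>
      first | (simp; done) | (obtain ⟨-, h⟩ := h; rw [Nat.even_iff] at heven; omega)

theorem exists_atPos_two_mul_mem_support (R : (Tk k).Walk vs vt) (m : ℕ) :
    ∃ s, atPos s (2 * m) ∈ R.support ∧ atPos s (2 * m + 1) ∈ R.support := by
  by_cases hm : 2 * k < m
  · have hvt : ∀ p, 4 * k < p → (atPos true p : TkV k) = vt := fun p hp => by
      simp [atPos, show p ≠ 0 by omega, show ¬ p ≤ 4 * k by omega]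
    exact ⟨true, by simp [hvt (2 * m) (by omega), hvt (2 * m + 1) (by omega)]⟩
  obtain ⟨d, hd, hfst, hsnd⟩ :=
    R.exists_boundary_dart {x | pos x ≤ 2 * m} (by simp [pos]) (by simp [pos]; omega)
  simp only [Set.mem_ofPred_eq, not_le] at hfst hsnd
  have hfst' : pos d.fst = 2 * m := by have := pos_adj d.adj; omega
  have hsnd' : pos d.snd = 2 * m + 1 := by have := pos_adj d.adj; omega
  obtain ⟨s, hs, hs'⟩ := exists_isOn_of_adj d.adj (by omega) ⟨m, by omega⟩
  refine ⟨s, ?_, ?_⟩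
  · rw [← hfst', atPos_pos hs]
    exact R.dart_fst_mem_support_of_mem_darts hd
  · rw [← hsnd', atPos_pos hs']
    exact R.dart_snd_mem_support_of_mem_darts hd

theorem eq_or_eq_or_eq_of_adj_onSide_one {s : Bool} {i : Fin k} {y : TkV k}
    (h : (Tk k).Adj (onSide s i 1) y) :
    y = onSide s i 0 ∨ y = onSide s i 2 ∨ y = onSide (!s) i 0 := by
  have := i.isLt
  obtain ⟨-, h | h⟩ := (fromRel_adj _ _ _).mp h <;>
  · cases s <;> cases y <;>
      simp only [onSide, cond, Bool.not_true, Bool.not_false, TkRel, lexIdx] at h ⊢ <;>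
      simp only [left.injEq, right.injEq, reduceCtorEq, Fin.ext_iff, Fin.val_zero, Fin.val_one,
        Fin.val_two, true_and, and_true, false_and, and_false, false_or, or_false] at h ⊢ <;>
      omega

section Rainbow

variable {C : Type} {ψ : TkV k → C} {R : (Tk k).Walk vs vt}

theorem not_left_mem_and_right_mem_of_color_eq (hR : IsVertexRainbow ψ R) {i i' : Fin k}
    {l l' : Fin 4} (hψ : ψ (left i l) = ψ (right i' l')) :
    ¬ (left i l ∈ R.support ∧ right i' l' ∈ R.support) := fun ⟨hl, hr⟩ =>
  absurd (hR.eq_of_mem_support hl (by simp) (by simp) hr (by simp) (by simp) hψ) (by simp)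

theorem side_eq_of_block (hR : IsVertexRainbow ψ R) {i : Fin k}
    (h1 : ψ (left i 0) = ψ (right i 3)) (h2 : ψ (left i 2) = ψ (right i 0))
    (h3 : ψ (left i 3) = ψ (right i 2)) {s₀ s₁ s₂ : Bool}
    (hs₀ : onSide s₀ i 0 ∈ R.support)
    (hs₁ : onSide s₁ i 2 ∈ R.support) (hs₂ : onSide s₂ i 3 ∈ R.support) :
    s₀ = s₁ ∧ s₁ = s₂ := by
  have c1 := not_left_mem_and_right_mem_of_color_eq hR h1
  have c2 := not_left_mem_and_right_mem_of_color_eq hR h2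
  have c3 := not_left_mem_and_right_mem_of_color_eq hR h3
  cases s₀ <;> cases s₁ <;> cases s₂ <;> simp_all [onSide]

theorem exists_forall_onSide_mem_support (hR : IsVertexRainbow ψ R)
    (h1 : ∀ i : Fin k, ψ (left i 0) = ψ (right i 3))
    (h2 : ∀ i : Fin k, ψ (left i 2) = ψ (right i 0))
    (h3 : ∀ i : Fin k, ψ (left i 3) = ψ (right i 2)) :
    ∃ s, ∀ i l, onSide s i l ∈ R.support := by
  choose side hside using exists_atPos_two_mul_mem_support R
  have hmem : ∀ m i l, (lexIdx i l + 1 = 2 * m ∨ lexIdx i l + 1 = 2 * m + 1) →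
      onSide (side m) i l ∈ R.support := by
    rintro m i l (hm | hm) <;> rw [← atPos_lexIdx_succ, hm]
    exacts [(hside m).1, (hside m).2]
  have hblock : ∀ i < k,
      side (2 * i) = side (2 * i + 1) ∧ side (2 * i + 1) = side (2 * i + 2) := fun i hi =>
    side_eq_of_block hR (h1 ⟨i, hi⟩) (h2 _) (h3 _) (hmem (2 * i) _ 0 (by simp [lexIdx]; omega))
      (hmem (2 * i + 1) _ 2 (by simp [lexIdx]; omega))
      (hmem (2 * i + 2) _ 3 (by simp [lexIdx]; omega))
  have hstep : ∀ m < 2 * k, side (m + 1) = side m := by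
    intro m hm
    obtain ⟨i, rfl | rfl⟩ := Nat.even_or_odd' m
    exacts [(hblock i (by omega)).1.symm, (hblock i (by omega)).2.symm]
  have hconst : ∀ m ≤ 2 * k, side m = side 0 := by
    intro m
    induction m with
    | zero => exact fun _ => rfl
    | succ m ih => exact fun hm => (hstep m (by omega)).trans (ih (by omega))
  refine ⟨side 0, fun i l => ?_⟩
  have := i.isLt
  have := l.isLt
  rw [← hconst ((lexIdx i l + 1) / 2) (by unfold lexIdx; omega)]
  exact hmem _ i l (by omega)

theorem onSide_not_notMem_support (hp : R.IsPath) (hR : IsVertexRainbow ψ R) {i : Fin k}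
    (h1 : ψ (left i 0) = ψ (right i 3)) (h2 : ψ (left i 2) = ψ (right i 0))
    (h3 : ψ (left i 3) = ψ (right i 2)) {s : Bool} (hs : ∀ l, onSide s i l ∈ R.support)
    (l : Fin 4) : onSide (!s) i l ∉ R.support := by
  intro hl
  have c1 := not_left_mem_and_right_mem_of_color_eq hR h1
  have c2 := not_left_mem_and_right_mem_of_color_eq hR h2
  have c3 := not_left_mem_and_right_mem_of_color_eq hR h3
  by_cases hl1 : l = 1
  · subst hl1
    obtain ⟨y, hy, hadj, hne⟩ :=
      hp.exists_adj_mem_support_ne hl (by cases s <;> simp [onSide]) (by cases s <;> simp [onSide])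
        (onSide s i 0)
    rcases eq_or_eq_or_eq_of_adj_onSide_one hadj with rfl | rfl | rfl
    · cases s <;> simp_all [onSide]
    · cases s <;> simp_all [onSide]
    · exact hne (by simp)
  · have := hs 0
    have := hs 2
    have := hs 3
    cases s <;> fin_cases l <;> simp_all [onSide]

end Rainbow

end TkV

theorem stmt15_general {C : Type} (k : ℕ) (ψ : TkV k → C)
    (h1 : ∀ i : Fin k, ψ (.left i 0) = ψ (.right i 3))
    (h2 : ∀ i : Fin k, ψ (.left i 2) = ψ (.right i 0))
    (h3 : ∀ i : Fin k, ψ (.left i 3) = ψ (.right i 2)) :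
    ∀ R : (Tk k).Walk .vs .vt, R.IsPath → IsVertexRainbow ψ R →
      ¬ ∃ (l l' : Fin k) (i j : Fin 4), i ≤ j ∧
          TkV.left l i ∈ R.support ∧ TkV.right l' j ∈ R.support := by
  rintro R hp hR ⟨l, l', i, j, -, hl, hl'⟩
  obtain ⟨s, hs⟩ := TkV.exists_forall_onSide_mem_support hR h1 h2 h3
  cases s
  · exact TkV.onSide_not_notMem_support hp hR (h1 l) (h2 l) (h3 l) (hs l) i hl
  · exact TkV.onSide_not_notMem_support hp hR (h1 l') (h2 l') (h3 l') (hs l') j hl'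

/-- For any coloring of `T_k` with `ψ(v_{i,1}) = ψ(v'_{i,4})`, `ψ(v_{i,3}) = ψ(v'_{i,1})`
and `ψ(v_{i,4}) = ψ(v'_{i,3})` for all `i`, no vertex rainbow `v_s`–`v_t` path contains
both a left vertex `v_{ℓ,i}` and a right vertex `v'_{ℓ',j}` with `i ≤ j`. -/
theorem stmt15 {C : Type} (k : ℕ) (hk : 1 ≤ k) (ψ : TkV k → C)
    (h1 : ∀ i : Fin k, ψ (.left i 0) = ψ (.right i 3))
    (h2 : ∀ i : Fin k, ψ (.left i 2) = ψ (.right i 0))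
    (h3 : ∀ i : Fin k, ψ (.left i 3) = ψ (.right i 2)) :
    ∀ R : (Tk k).Walk .vs .vt, R.IsPath → IsVertexRainbow ψ R →
      ¬ ∃ (l l' : Fin k) (i j : Fin 4), i ≤ j ∧
          TkV.left l i ∈ R.support ∧ TkV.right l' j ∈ R.support :=
  stmt15_general k ψ h1 h2 h3
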